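/- arXiv:2202.07866 — 5 statements merged into one kernel-verified Lean document; each statement's English description precedes it below -/
import Mathlib

section
/- For all real numbers x, y and any p with 0 < p ≤ 1, the inequality |sign(x)|x|^p − sign(y)|y|^p| ≤ 2^(1−p)|x − y|^p holds. -/
noncomputable def sig (p x : ℝ) : ℝ := Real.sign x * |x| ^ p

lemma sig_of_nonneg {p x : ℝ} (hp : 0 < p) (hx : 0 ≤ x) : sig p x = x ^ p := by
  rcases eq_or_lt_of_le hx with h | h
  · simp [sig, ← h, Real.sign_zero, Real.zero_rpow hp.ne']
  · simp [sig, Real.sign_of_pos h, abs_of_pos h]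

lemma sig_neg (p x : ℝ) : sig p (-x) = - sig p x := by
  simp [sig, Real.sign_neg, abs_neg]

lemma rpow_subadd {a b p : ℝ} (ha : 0 ≤ a) (hb : 0 ≤ b) (hp : 0 ≤ p) (hp1 : p ≤ 1) :
    (a + b) ^ p ≤ a ^ p + b ^ p := by
  have h := NNReal.rpow_add_le_add_rpow a.toNNReal b.toNNReal hp hp1
  rw [← Real.toNNReal_add ha hb] at h
  have := NNReal.coe_le_coe.2 h
  simpa [NNReal.coe_rpow, Real.coe_toNNReal _ (by linarith : (0:ℝ) ≤ a + b),
    Real.coe_toNNReal _ ha, Real.coe_toNNReal _ hb] using this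

lemma rpow_add_le {a b p : ℝ} (ha : 0 ≤ a) (hb : 0 ≤ b) (hp : 0 < p) (hp1 : p ≤ 1) :
    a ^ p + b ^ p ≤ 2 ^ (1 - p) * (a + b) ^ p := by
  have hc := (Real.concaveOn_rpow hp.le hp1).2 (Set.mem_Ici.2 (by linarith : (0:ℝ) ≤ 2 * a))
    (Set.mem_Ici.2 (by linarith : (0:ℝ) ≤ 2 * b)) (by norm_num : (0:ℝ) ≤ 1/2)
    (by norm_num : (0:ℝ) ≤ 1/2) (by norm_num)
  simp only [smul_eq_mul] at hc
  have h2a : (2 * a) ^ p = 2 ^ p * a ^ p := Real.mul_rpow (by norm_num) ha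
  have h2b : (2 * b) ^ p = 2 ^ p * b ^ p := Real.mul_rpow (by norm_num) hb
  have harg : 1/2 * (2 * a) + 1/2 * (2 * b) = a + b := by ring
  rw [harg, h2a, h2b] at hc
  have h2p : (0:ℝ) < 2 ^ p := Real.rpow_pos_of_pos (by norm_num) p
  have key : 2 ^ p * (a ^ p + b ^ p) ≤ 2 * (a + b) ^ p := by nlinarith
  have h2 : (2:ℝ) ^ (1 - p) = 2 / 2 ^ p := by
    rw [Real.rpow_sub (by norm_num), Real.rpow_one]
  rw [h2]
  rw [div_mul_eq_mul_div, le_div_iff₀ h2p]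
  nlinarith

lemma stmt_2_aux (x y p : ℝ) (hp0 : 0 < p) (hp1 : p ≤ 1) (hxy : y ≤ x) :
    |sig p x - sig p y| ≤ 2 ^ (1 - p) * |x - y| ^ p := by
  have h2p : (1:ℝ) ≤ 2 ^ (1 - p) :=
    Real.one_le_rpow (by norm_num) (by linarith)
  have habs : |x - y| = x - y := abs_of_nonneg (by linarith)
  rw [habs]
  have hxyp : (0:ℝ) ≤ (x - y) ^ p := Real.rpow_nonneg (by linarith) p
  rcases le_or_gt 0 y with hy | hy
  · -- both nonneg
    have hx : 0 ≤ x := le_trans hy hxy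
    rw [sig_of_nonneg hp0 hx, sig_of_nonneg hp0 hy]
    have hmono : y ^ p ≤ x ^ p := Real.rpow_le_rpow hy hxy hp0.le
    rw [abs_of_nonneg (by linarith)]
    have hsub : x ^ p ≤ (x - y) ^ p + y ^ p := by
      have := rpow_subadd (by linarith : (0:ℝ) ≤ x - y) hy hp0.le hp1
      simpa using this
    nlinarith
  rcases le_or_gt x 0 with hx | hx
  · -- both nonpos
    have h1 : sig p x = - (-x) ^ p := by
      rw [← sig_of_nonneg hp0 (by linarith : (0:ℝ) ≤ -x), sig_neg]; ring
    have h2 : sig p y = - (-y) ^ p := by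
      rw [← sig_of_nonneg hp0 (by linarith : (0:ℝ) ≤ -y), sig_neg]; ring
    rw [h1, h2]
    have hmono : (-x) ^ p ≤ (-y) ^ p := Real.rpow_le_rpow (by linarith) (by linarith) hp0.le
    have hsub : (-y) ^ p ≤ (x - y) ^ p + (-x) ^ p := by
      have := rpow_subadd (by linarith : (0:ℝ) ≤ x - y) (by linarith : (0:ℝ) ≤ -x) hp0.le hp1
      have he : x - y + -x = -y := by ring
      rwa [he] at this
    rw [abs_of_nonneg (by linarith)]
    nlinarith
  · -- y < 0 < x
    have h1 : sig p x = x ^ p := sig_of_nonneg hp0 hx.le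
    have h2 : sig p y = - (-y) ^ p := by
      rw [← sig_of_nonneg hp0 (by linarith : (0:ℝ) ≤ -y), sig_neg]; ring
    rw [h1, h2, sub_neg_eq_add]
    have hxp : (0:ℝ) ≤ x ^ p := Real.rpow_nonneg hx.le p
    have hyp : (0:ℝ) ≤ (-y) ^ p := Real.rpow_nonneg (by linarith) p
    rw [abs_of_nonneg (by linarith)]
    have := rpow_add_le hx.le (by linarith : (0:ℝ) ≤ -y) hp0 hp1
    have he : x + -y = x - y := by ring
    rwa [he] at this

theorem stmt_2 (x y p : ℝ) (hp0 : 0 < p) (hp1 : p ≤ 1) :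
    |sig p x - sig p y| ≤ 2 ^ (1 - p) * |x - y| ^ p := by
  rcases le_or_gt y x with h | h
  · exact stmt_2_aux x y p hp0 hp1 h
  · have := stmt_2_aux y x p hp0 hp1 h.le
    rwa [abs_sub_comm, abs_sub_comm y x] at this
end

section
/- Suppose V : [0,∞) → ℝ is a continuously differentiable nonnegative function satisfying V'(t) ≤ −(p₀ V(t)^p + q₀ V(t)^q) for all t ≥ 0, where p₀, q₀ > 0, 0 < p < 1, and q > 1. Then V(t) = 0 for all t ≥ T*, where T* = 1/(p₀(1−p)) + 1/(q₀(q−1)). -/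
/-!
Along a positive solution of `V' ≤ -c V ^ r` with `r ≠ 1`, the quantity `V ^ (1 - r) / (1 - r)`
decreases at rate at least `c`. For `r = q > 1` this forces `V ≤ 1` after time `1 / (q₀ (q - 1))`,
whatever `V 0` is, since `V ^ (1 - q)` would otherwise have to exceed `1`. From then on, with
`r = p < 1`, `V ^ (1 - p) ≤ 1` drops to `0` within a further time `1 / (p₀ (1 - p))`.
-/

open Set

lemma antitoneOn_Icc_of_hasDerivAt_nonpos {f f' : ℝ → ℝ} {a b : ℝ}
    (hf : ∀ x ∈ Icc a b, HasDerivAt f (f' x) x) (hf' : ∀ x ∈ Icc a b, f' x ≤ 0) :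
    AntitoneOn f (Icc a b) :=
  antitoneOn_of_hasDerivWithinAt_nonpos (convex_Icc a b)
    (fun x hx => (hf x hx).continuousAt.continuousWithinAt)
    (fun x hx => (hf x (interior_subset hx)).hasDerivWithinAt)
    (fun x hx => hf' x (interior_subset hx))

lemma sub_le_mul_sub_of_hasDerivAt_le {f f' : ℝ → ℝ} {a b C : ℝ} (hab : a ≤ b)
    (hf : ∀ x ∈ Icc a b, HasDerivAt f (f' x) x) (hf' : ∀ x ∈ Icc a b, f' x ≤ C) :
    f b - f a ≤ C * (b - a) := by
  have hanti : AntitoneOn (fun x => f x - C * x) (Icc a b) :=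
    antitoneOn_Icc_of_hasDerivAt_nonpos
      (fun x hx => by simpa using (hf x hx).fun_sub ((hasDerivAt_id' x).const_mul C))
      (fun x hx => sub_nonpos.2 (hf' x hx))
  have := hanti (left_mem_Icc.2 hab) (right_mem_Icc.2 hab) hab
  simp only at this
  linarith

section DecayRate

variable {W W' : ℝ → ℝ} {a b c r : ℝ}

lemma antitoneOn_of_hasDerivAt_le_neg_rpow (hc : 0 ≤ c)
    (hW : ∀ s ∈ Icc a b, HasDerivAt W (W' s) s) (hnonneg : ∀ s ∈ Icc a b, 0 ≤ W s)
    (hineq : ∀ s ∈ Icc a b, W' s ≤ -c * W s ^ r) :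
    AntitoneOn W (Icc a b) :=
  antitoneOn_Icc_of_hasDerivAt_nonpos hW fun s hs => (hineq s hs).trans <| by
    have := Real.rpow_nonneg (hnonneg s hs) r
    nlinarith

lemma rpow_one_sub_div_sub_le (hr : r ≠ 1) (hab : a ≤ b)
    (hW : ∀ s ∈ Icc a b, HasDerivAt W (W' s) s) (hpos : ∀ s ∈ Icc a b, 0 < W s)
    (hineq : ∀ s ∈ Icc a b, W' s ≤ -c * W s ^ r) :
    W b ^ (1 - r) / (1 - r) - W a ^ (1 - r) / (1 - r) ≤ -c * (b - a) := by
  have hr' : 1 - r ≠ 0 := sub_ne_zero.2 hr.symm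
  refine sub_le_mul_sub_of_hasDerivAt_le (f := fun s => W s ^ (1 - r) / (1 - r)) hab
    (fun s hs => ((hW s hs).rpow_const (Or.inl (hpos s hs).ne')).div_const (1 - r))
    (fun s hs => ?_)
  have hWs := hpos s hs
  have hinv : W s ^ r * W s ^ (-r) = 1 := by
    rw [← Real.rpow_add hWs, add_neg_cancel, Real.rpow_zero]
  have hneg : 0 < W s ^ (-r) := Real.rpow_pos_of_pos hWs _
  calc W' s * (1 - r) * W s ^ (1 - r - 1) / (1 - r)
      = W' s * W s ^ (-r) := by rw [sub_sub_cancel_left]; field_simp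
    _ ≤ -c * W s ^ r * W s ^ (-r) := mul_le_mul_of_nonneg_right (hineq s hs) hneg.le
    _ = -c := by rw [mul_assoc, hinv, mul_one]

lemma le_one_of_hasDerivAt_le_neg_rpow (hr : 1 < r) (hc : 0 ≤ c)
    (hW : ∀ s ∈ Icc a b, HasDerivAt W (W' s) s) (hnonneg : ∀ s ∈ Icc a b, 0 ≤ W s)
    (hineq : ∀ s ∈ Icc a b, W' s ≤ -c * W s ^ r) (htime : 1 ≤ c * (r - 1) * (b - a)) :
    W b ≤ 1 := by
  have hab : a ≤ b := by nlinarith [mul_nonneg hc (sub_nonneg.2 hr.le)]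
  by_contra! hWb
  have hanti := antitoneOn_of_hasDerivAt_le_neg_rpow hc hW hnonneg hineq
  have hpos : ∀ s ∈ Icc a b, 0 < W s := fun s hs =>
    zero_lt_one.trans (hWb.trans_le (hanti hs (right_mem_Icc.2 hab) hs.2))
  have hdecay := rpow_one_sub_div_sub_le hr.ne' hab hW hpos hineq
  have hWa : 0 < W a ^ (1 - r) := Real.rpow_pos_of_pos (hpos a (left_mem_Icc.2 hab)) _
  have hWb' : W b ^ (1 - r) < 1 := Real.rpow_lt_one_of_one_lt_of_neg hWb (by linarith)
  rw [← sub_div, div_le_iff_of_neg (by linarith)] at hdecay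
  nlinarith

lemma eq_zero_of_hasDerivAt_le_neg_rpow (hr : r < 1) (hc : 0 ≤ c) (hab : a ≤ b)
    (hW : ∀ s ∈ Icc a b, HasDerivAt W (W' s) s) (hnonneg : ∀ s ∈ Icc a b, 0 ≤ W s)
    (hineq : ∀ s ∈ Icc a b, W' s ≤ -c * W s ^ r)
    (htime : W a ^ (1 - r) ≤ c * (1 - r) * (b - a)) :
    W b = 0 := by
  by_contra hWb
  have hWb : 0 < W b := (hnonneg b (right_mem_Icc.2 hab)).lt_of_ne' hWb
  have hanti := antitoneOn_of_hasDerivAt_le_neg_rpow hc hW hnonneg hineq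
  have hpos : ∀ s ∈ Icc a b, 0 < W s := fun s hs =>
    hWb.trans_le (hanti hs (right_mem_Icc.2 hab) hs.2)
  have hdecay := rpow_one_sub_div_sub_le hr.ne hab hW hpos hineq
  have hWb' : 0 < W b ^ (1 - r) := Real.rpow_pos_of_pos hWb _
  rw [← sub_div, div_le_iff₀ (by linarith)] at hdecay
  nlinarith

end DecayRate

theorem stmt_8_general (V V' : ℝ → ℝ) (p₀ q₀ p q : ℝ)
    (hp₀ : 0 < p₀) (hq₀ : 0 < q₀) (hp1 : p < 1) (hq : 1 < q)
    (hVnonneg : ∀ t, 0 ≤ t → 0 ≤ V t)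
    (hderiv : ∀ t, 0 ≤ t → HasDerivAt V (V' t) t)
    (hineq : ∀ t, 0 ≤ t → V' t ≤ -(p₀ * V t ^ p + q₀ * V t ^ q)) :
    ∀ t, 1 / (p₀ * (1 - p)) + 1 / (q₀ * (q - 1)) ≤ t → V t = 0 := by
  intro t ht
  set T₂ := 1 / (q₀ * (q - 1))
  have hT₂ : 0 ≤ T₂ := by positivity
  have hineq_p : ∀ s, 0 ≤ s → V' s ≤ -p₀ * V s ^ p := fun s hs => by
    have := Real.rpow_nonneg (hVnonneg s hs) q
    nlinarith [hineq s hs]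
  have hineq_q : ∀ s, 0 ≤ s → V' s ≤ -q₀ * V s ^ q := fun s hs => by
    have := Real.rpow_nonneg (hVnonneg s hs) p
    nlinarith [hineq s hs]
  have hVT₂ : V T₂ ≤ 1 :=
    le_one_of_hasDerivAt_le_neg_rpow hq hq₀.le (fun s hs => hderiv s hs.1)
      (fun s hs => hVnonneg s hs.1) (fun s hs => hineq_q s hs.1)
      (by rw [sub_zero, mul_one_div_cancel (mul_pos hq₀ (sub_pos.2 hq)).ne'])
  have hc₁ : 0 < p₀ * (1 - p) := mul_pos hp₀ (sub_pos.2 hp1)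
  have hT₂t : T₂ ≤ t := by linarith [one_div_pos.2 hc₁]
  refine eq_zero_of_hasDerivAt_le_neg_rpow hp1 hp₀.le hT₂t
    (fun s hs => hderiv s (hT₂.trans hs.1)) (fun s hs => hVnonneg s (hT₂.trans hs.1))
    (fun s hs => hineq_p s (hT₂.trans hs.1)) ?_
  calc V T₂ ^ (1 - p) ≤ 1 := Real.rpow_le_one (hVnonneg T₂ hT₂) hVT₂ (by linarith)
    _ = p₀ * (1 - p) * (1 / (p₀ * (1 - p))) := (mul_one_div_cancel hc₁.ne').symm
    _ ≤ p₀ * (1 - p) * (t - T₂) := by gcongr; linarith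

theorem stmt_8 (V V' : ℝ → ℝ) (p₀ q₀ p q : ℝ)
    (hp₀ : 0 < p₀) (hq₀ : 0 < q₀) (hp0 : 0 < p) (hp1 : p < 1) (hq : 1 < q)
    (hVnonneg : ∀ t, 0 ≤ t → 0 ≤ V t)
    (hderiv : ∀ t, 0 ≤ t → HasDerivAt V (V' t) t)
    (hcont : ContinuousOn V' (Set.Ici (0 : ℝ)))
    (hineq : ∀ t, 0 ≤ t → V' t ≤ -(p₀ * V t ^ p + q₀ * V t ^ q)) :
    ∀ t, 1 / (p₀ * (1 - p)) + 1 / (q₀ * (q - 1)) ≤ t → V t = 0 :=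
  stmt_8_general V V' p₀ q₀ p q hp₀ hq₀ hp1 hq hVnonneg hderiv hineq
end

section
/- Suppose V : [0,∞) → ℝ is a continuously differentiable nonnegative function satisfying V'(t) ≤ −ρ V(t)^α for all t ≥ 0 with V(t) > 0, where ρ > 0 and 0 < α < 1. Then V(t) = 0 for all t ≥ V(0)^(1−α)/(ρ(1−α)). -/
theorem stmt_9 (V V' : ℝ → ℝ) (ρ α : ℝ)
    (hρ : 0 < ρ) (hα0 : 0 < α) (hα1 : α < 1)
    (hVnonneg : ∀ t, 0 ≤ t → 0 ≤ V t)
    (hderiv : ∀ t, 0 ≤ t → HasDerivAt V (V' t) t)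
    (hcont : ContinuousOn V' (Set.Ici (0 : ℝ)))
    (hineq : ∀ t, 0 ≤ t → 0 < V t → V' t ≤ -ρ * V t ^ α) :
    ∀ t, V 0 ^ (1 - α) / (ρ * (1 - α)) ≤ t → V t = 0 := by
  have h1α : (0:ℝ) < 1 - α := by linarith
  set c := ρ * (1 - α) with hc
  have hc0 : 0 < c := mul_pos hρ h1α
  have hVcont : ∀ t, 0 ≤ t → ContinuousAt V t := fun t ht => (hderiv t ht).continuousAt
  have key : ∀ a b : ℝ, 0 ≤ a → a ≤ b → (∀ u, a < u → u ≤ b → 0 < V u) →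
      V b ^ (1 - α) ≤ V a ^ (1 - α) - c * (b - a) := by
    intro a b ha hab hpos
    set g : ℝ → ℝ := fun u => V u ^ (1 - α) + c * u with hg
    have hgc : ContinuousOn g (Set.Icc a b) := by
      apply ContinuousOn.add
      · apply ContinuousOn.rpow_const
        · exact fun x hx => (hVcont x (le_trans ha hx.1)).continuousWithinAt
        · exact fun x hx => Or.inr h1α.le
      · exact (continuous_const.mul continuous_id).continuousOn
    have hder : ∀ x ∈ Set.Ioo a b, HasDerivAt g (V' x * (1 - α) * V x ^ (1 - α - 1) + c) x := by
      intro x hx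
      have hx0 : 0 < V x := hpos x hx.1 hx.2.le
      have hxge : (0:ℝ) ≤ x := le_trans ha hx.1.le
      have hd1 : HasDerivAt (fun u => V u ^ (1 - α)) (V' x * (1 - α) * V x ^ (1 - α - 1)) x :=
        (hderiv x hxge).rpow_const (Or.inl hx0.ne')
      have hd2 : HasDerivAt (fun u : ℝ => c * u) c x := by
        simpa using (hasDerivAt_id x).const_mul c
      exact hd1.add hd2
    have hmono : AntitoneOn g (Set.Icc a b) := by
      apply antitoneOn_of_deriv_nonpos (convex_Icc a b) hgc
      · intro x hx
        rw [interior_Icc] at hx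
        exact (hder x hx).differentiableAt.differentiableWithinAt
      intro x hx
      rw [interior_Icc] at hx
      have hx0 : 0 < V x := hpos x hx.1 hx.2.le
      have hxge : (0:ℝ) ≤ x := le_trans ha hx.1.le
      have hineqx := hineq x hxge hx0
      rw [(hder x hx).deriv]
      have hmul : V x ^ α * V x ^ (-α) = 1 := by
        rw [← Real.rpow_add hx0]; simp
      have hVp : 0 < V x ^ (-α) := Real.rpow_pos_of_pos hx0 _
      have h2 : V' x * ((1 - α) * V x ^ (-α)) ≤ (-ρ * V x ^ α) * ((1 - α) * V x ^ (-α)) :=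
        mul_le_mul_of_nonneg_right hineqx (by positivity)
      have h3 : (-ρ * V x ^ α) * ((1 - α) * V x ^ (-α)) = -c := by
        rw [hc]; ring_nf
        nlinarith [hmul]
      have : 1 - α - 1 = -α := by ring
      rw [this]
      nlinarith [h2, h3]
    have hgab : g b ≤ g a := hmono (Set.left_mem_Icc.2 hab) (Set.right_mem_Icc.2 hab) hab
    simp only [hg] at hgab
    linarith
  intro t ht
  have hT0 : 0 ≤ V 0 ^ (1 - α) / c :=
    div_nonneg (Real.rpow_nonneg (hVnonneg 0 le_rfl) _) hc0.le
  have ht0 : 0 ≤ t := le_trans hT0 ht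
  by_contra hVt
  have hVtpos : 0 < V t := lt_of_le_of_ne (hVnonneg t ht0) (Ne.symm hVt)
  have hWt : 0 < V t ^ (1 - α) := Real.rpow_pos_of_pos hVtpos _
  by_cases hK : (∃ u, u ∈ Set.Icc (0:ℝ) t ∧ V u = 0)
  · set S : Set ℝ := {u | u ∈ Set.Icc (0:ℝ) t ∧ V u = 0} with hS
    have hScl : IsClosed S := by
      have : S = Set.Icc (0:ℝ) t ∩ V ⁻¹' {0} := by
        ext u; simp [hS]
      rw [this]
      exact ContinuousOn.preimage_isClosed_of_isClosed
        (fun x hx => (hVcont x hx.1).continuousWithinAt) isClosed_Icc isClosed_singleton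
    have hSne : S.Nonempty := hK
    have hSbdd : BddAbove S := (bddAbove_Icc).mono (fun u hu => hu.1)
    have haS : sSup S ∈ S := hScl.csSup_mem hSne hSbdd
    set a := sSup S with haa
    have ha0 : 0 ≤ a := haS.1.1
    have hat : a ≤ t := haS.1.2
    have hVa : V a = 0 := haS.2
    have halt : a < t := lt_of_le_of_ne hat (fun h => hVt (h ▸ hVa))
    have hpos : ∀ u, a < u → u ≤ t → 0 < V u := by
      intro u hau hut
      have hu0 : 0 ≤ u := le_trans ha0 hau.le
      rcases lt_or_eq_of_le (hVnonneg u hu0) with h | h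
      · exact h
      · exfalso
        have : u ∈ S := ⟨⟨hu0, hut⟩, h.symm⟩
        exact absurd (le_csSup hSbdd this) (not_le.2 hau)
    have := key a t ha0 hat hpos
    rw [hVa, Real.zero_rpow (by linarith : 1 - α ≠ 0)] at this
    nlinarith
  · push_neg at hK
    have hpos : ∀ u, (0:ℝ) < u → u ≤ t → 0 < V u := by
      intro u hu0 hut
      exact lt_of_le_of_ne (hVnonneg u hu0.le) (fun h => hK u ⟨hu0.le, hut⟩ h.symm)
    have hkey := key 0 t le_rfl ht0 hpos
    have hcT : V 0 ^ (1 - α) ≤ c * t := by rw [mul_comm]; exact (div_le_iff₀ hc0).1 ht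
    linarith
end

section
/- Let M be a real symmetric positive definite m×m matrix with k_m I ⪯ M ⪯ k_M I for constants 0 < k_m ≤ k_M, and let M̂ = (2/(k_m^{-1} + k_M^{-1})) I. Then the operator norm satisfies ‖M^{-1} M̂ − I‖ ≤ ε, where ε = (k_m^{-1} − k_M^{-1})/(k_m^{-1} + k_M^{-1}). -/
/-!
Conjugating by the orthogonal matrix of eigenvectors of `M` is an isometric ⋆-algebra automorphism
for the operator norm, and it turns `M⁻¹ * M̂ - 1` into the diagonal matrix with entries
`c / μᵢ - 1`, where `c = 2 / (k_m⁻¹ + k_M⁻¹)` and `μᵢ ∈ [k_m, k_M]` are the eigenvalues of `M`.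
The norm of a diagonal matrix is the largest absolute value of its entries, and
`t ↦ c t - 1` maps `[k_M⁻¹, k_m⁻¹]` onto `[-ε, ε]`.
-/

open Matrix Unitary
open scoped Matrix.Norms.L2Operator ComplexOrder

theorem CStarRing.norm_conjStarAlgAut {S E : Type*} [NormedRing E] [StarRing E] [CStarRing E]
    [SMul S E] [IsScalarTower S E E] [SMulCommClass S E E] (u : unitary E) (x : E) :
    ‖conjStarAlgAut S E u x‖ = ‖x‖ := by
  rw [conjStarAlgAut_apply, CStarRing.norm_mul_mem_unitary _ (star_mem u.2),
    CStarRing.norm_mem_unitary_mul _ u.2]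

namespace Matrix

variable {n 𝕜 : Type*} [Fintype n] [DecidableEq n] [RCLike 𝕜]

theorem map_nonsing_inv {α F : Type*} [CommRing α] [FunLike F (Matrix n n α) (Matrix n n α)]
    [MonoidHomClass F (Matrix n n α) (Matrix n n α)] (f : F) {A : Matrix n n α} (hA : IsUnit A) :
    f A⁻¹ = (f A)⁻¹ :=
  (inv_eq_left_inv <| by
    rw [← map_mul, nonsing_inv_mul _ ((isUnit_iff_isUnit_det A).mp hA), map_one]).symm

theorem inv_diagonal_of_ne_zero {K : Type*} [Field K] {v : n → K} (hv : ∀ i, v i ≠ 0) :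
    (diagonal v)⁻¹ = diagonal v⁻¹ :=
  inv_eq_left_inv <| by
    rw [diagonal_mul_diagonal, ← diagonal_one]
    exact congrArg diagonal (funext fun i ↦ inv_mul_cancel₀ (hv i))

theorem PosSemidef.conjStarAlgAut {A : Matrix n n 𝕜} (hA : A.PosSemidef)
    (u : unitary (Matrix n n 𝕜)) : (conjStarAlgAut 𝕜 _ u A).PosSemidef := by
  simpa [star_eq_conjTranspose] using hA.mul_mul_conjTranspose_same (u : Matrix n n 𝕜)

theorem IsHermitian.conjStarAlgAut_sub_smul_one {A : Matrix n n 𝕜} (hA : A.IsHermitian) (c : ℝ) :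
    conjStarAlgAut 𝕜 _ (star hA.eigenvectorUnitary) (A - c • 1) =
      diagonal fun i ↦ ((hA.eigenvalues i - c : ℝ) : 𝕜) := by
  rw [map_sub, conjStarAlgAut_star_eigenvectorUnitary, LinearMapClass.map_smul_of_tower, map_one,
    ← diagonal_one, ← diagonal_smul, diagonal_sub]
  congr 1
  ext i
  simp [RCLike.real_smul_eq_coe_mul]

theorem IsHermitian.le_eigenvalues {A : Matrix n n 𝕜} (hA : A.IsHermitian) {c : ℝ}
    (h : (A - c • 1).PosSemidef) (i : n) : c ≤ hA.eigenvalues i := by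
  have := (h.conjStarAlgAut (star hA.eigenvectorUnitary)).diag_nonneg (i := i)
  rw [hA.conjStarAlgAut_sub_smul_one, diagonal_apply_eq, RCLike.ofReal_nonneg] at this
  linarith

theorem IsHermitian.eigenvalues_le {A : Matrix n n 𝕜} (hA : A.IsHermitian) {c : ℝ}
    (h : (c • 1 - A).PosSemidef) (i : n) : hA.eigenvalues i ≤ c := by
  have := (h.conjStarAlgAut (star hA.eigenvectorUnitary)).diag_nonneg (i := i)
  rw [← neg_sub, map_neg, hA.conjStarAlgAut_sub_smul_one, neg_apply, diagonal_apply_eq,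
    ← RCLike.ofReal_neg, RCLike.ofReal_nonneg] at this
  linarith

end Matrix

theorem abs_two_div_inv_add_inv_mul_inv_sub_one_le {a b t : ℝ} (ha : 0 < a) (hat : a ≤ t)
    (htb : t ≤ b) : |2 / (a⁻¹ + b⁻¹) * t⁻¹ - 1| ≤ (a⁻¹ - b⁻¹) / (a⁻¹ + b⁻¹) := by
  have ht : 0 < t := ha.trans_le hat
  have hs : 0 < a⁻¹ + b⁻¹ := by have := ht.trans_le htb; positivity
  have hta : t⁻¹ ≤ a⁻¹ := inv_anti₀ ha hat
  have hbt : b⁻¹ ≤ t⁻¹ := inv_anti₀ ht htb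
  rw [show 2 / (a⁻¹ + b⁻¹) * t⁻¹ - 1 = (2 * t⁻¹ - (a⁻¹ + b⁻¹)) / (a⁻¹ + b⁻¹) by
      rw [sub_div, div_self hs.ne']; ring,
    abs_div, abs_of_pos hs, div_le_div_iff_of_pos_right hs, abs_le]
  constructor <;> linarith

theorem stmt_11_general (m : ℕ) (M : Matrix (Fin m) (Fin m) ℝ)
    (hPD : M.PosDef)
    (km kM : ℝ) (hkm : 0 < km) (hkmM : km ≤ kM)
    (hlow : (M - km • (1 : Matrix (Fin m) (Fin m) ℝ)).PosSemidef)
    (hupp : ((kM • (1 : Matrix (Fin m) (Fin m) ℝ)) - M).PosSemidef)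
    (Mhat : Matrix (Fin m) (Fin m) ℝ)
    (hMhat : Mhat = (2 / (km⁻¹ + kM⁻¹)) • (1 : Matrix (Fin m) (Fin m) ℝ)) :
    ‖M⁻¹ * Mhat - 1‖ ≤ (km⁻¹ - kM⁻¹) / (km⁻¹ + kM⁻¹) := by
  have hH := hPD.isHermitian
  set μ := hH.eigenvalues
  set ψ := conjStarAlgAut ℝ (Matrix (Fin m) (Fin m) ℝ) (star hH.eigenvectorUnitary)
  have hψM : ψ M = diagonal μ := by simpa [ψ] using hH.conjStarAlgAut_star_eigenvectorUnitary
  have hψ : ψ (M⁻¹ * Mhat - 1) = diagonal fun i ↦ 2 / (km⁻¹ + kM⁻¹) * (μ i)⁻¹ - 1 := by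
    rw [map_sub, map_mul, map_nonsing_inv ψ hPD.isUnit, hψM, hMhat, map_smul, map_one,
      inv_diagonal_of_ne_zero fun i ↦ (hPD.eigenvalues_pos i).ne', mul_smul_comm, mul_one,
      ← diagonal_one, ← diagonal_smul, diagonal_sub]
    rfl
  have hε := (abs_nonneg _).trans (abs_two_div_inv_add_inv_mul_inv_sub_one_le hkm le_rfl hkmM)
  rw [← CStarRing.norm_conjStarAlgAut (S := ℝ) (star hH.eigenvectorUnitary), hψ,
    l2_opNorm_diagonal, pi_norm_le_iff_of_nonneg hε]
  exact fun i ↦ (Real.norm_eq_abs _).trans_le <|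
    abs_two_div_inv_add_inv_mul_inv_sub_one_le hkm (hH.le_eigenvalues hlow i)
      (hH.eigenvalues_le hupp i)

theorem stmt_11 (m : ℕ) (M : Matrix (Fin m) (Fin m) ℝ)
    (hsymm : M.IsSymm) (hPD : M.PosDef)
    (km kM : ℝ) (hkm : 0 < km) (hkmM : km ≤ kM)
    (hlow : (M - km • (1 : Matrix (Fin m) (Fin m) ℝ)).PosSemidef)
    (hupp : ((kM • (1 : Matrix (Fin m) (Fin m) ℝ)) - M).PosSemidef)
    (Mhat : Matrix (Fin m) (Fin m) ℝ)
    (hMhat : Mhat = (2 / (km⁻¹ + kM⁻¹)) • (1 : Matrix (Fin m) (Fin m) ℝ)) :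
    ‖M⁻¹ * Mhat - 1‖ ≤ (km⁻¹ - kM⁻¹) / (km⁻¹ + kM⁻¹) :=
  stmt_11_general m M hPD km kM hkm hkmM hlow hupp Mhat hMhat
end

section
/- Let 0 < α < 1 and v, v* ∈ ℝ^m, and let ε ∈ ℝ^m be given by εⱼ = sig^{1/α}(vⱼ) − sig^{1/α}(v*ⱼ), where |vⱼ − v*ⱼ| ≤ 2^{1−α}|εⱼ|^α componentwise. Define d = ∑ⱼ |∫_{v*ⱼ}^{vⱼ} |sig^{1/α}(s) − sig^{1/α}(v*ⱼ)|^{2−α} ds|. Then 0 ≤ d ≤ 2^{1−α} ‖ε‖². -/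
lemma sig_mono {p : ℝ} (hp : 0 < p) : Monotone (sig p) := by
  have hpos : ∀ x : ℝ, 0 ≤ x → sig p x = x ^ p := by
    intro x hx
    rcases eq_or_lt_of_le hx with h | h
    · simp [sig, ← h, Real.zero_rpow hp.ne']
    · rw [sig, Real.sign_of_pos h, abs_of_pos h, one_mul]
  have hneg : ∀ x : ℝ, x < 0 → sig p x = -((-x) ^ p) := by
    intro x hx
    rw [sig, Real.sign_of_neg hx, abs_of_neg hx]; ring
  intro x y hxy
  rcases le_or_gt 0 x with hx | hx
  · rw [hpos x hx, hpos y (hx.trans hxy)]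
    exact Real.rpow_le_rpow hx hxy hp.le
  · rcases le_or_gt 0 y with hy | hy
    · rw [hneg x hx, hpos y hy]
      have h1 : 0 ≤ (-x) ^ p := Real.rpow_nonneg (by linarith) p
      have h2 : 0 ≤ y ^ p := Real.rpow_nonneg hy p
      linarith
    · rw [hneg x hx, hneg y hy]
      have := Real.rpow_le_rpow (by linarith : (0:ℝ) ≤ -y)
        (by linarith : -y ≤ -x) hp.le
      linarith

theorem stmt_18 (m : ℕ) (v vstar ε : Fin m → ℝ) (α : ℝ) (hα0 : 0 < α) (hα1 : α < 1)
    (hε : ∀ j, ε j = sig (1 / α) (v j) - sig (1 / α) (vstar j))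
    (hbound : ∀ j, |v j - vstar j| ≤ 2 ^ (1 - α) * |ε j| ^ α)
    (d : ℝ)
    (hd : d = ∑ j, |∫ s in (vstar j)..(v j), |sig (1 / α) s - sig (1 / α) (vstar j)| ^ (2 - α)|) :
    0 ≤ d ∧ d ≤ 2 ^ (1 - α) * ∑ j, (ε j) ^ 2 := by
  have hp : (0:ℝ) < 1 / α := by positivity
  have hmono := sig_mono hp
  constructor
  · rw [hd]; exact Finset.sum_nonneg fun j _ => abs_nonneg _
  · rw [hd, Finset.mul_sum]
    apply Finset.sum_le_sum
    intro j _
    set f : ℝ → ℝ := sig (1 / α) with hf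
    -- pointwise bound on the integrand
    have hpt : ∀ s ∈ Set.uIcc (vstar j) (v j),
        |f s - f (vstar j)| ≤ |ε j| := by
      intro s hs
      rw [Set.mem_uIcc] at hs
      rw [hε j]
      rcases hs with ⟨h1, h2⟩ | ⟨h1, h2⟩
      · have a1 := hmono h1
        have a2 := hmono h2
        rw [abs_of_nonneg (by linarith), abs_of_nonneg (by linarith)]
        linarith
      · have a1 := hmono h1
        have a2 := hmono h2
        rw [abs_of_nonpos (by linarith), abs_of_nonpos (by linarith)]
        linarith
    have hC : (0:ℝ) ≤ |ε j| ^ (2 - α) := Real.rpow_nonneg (abs_nonneg _) _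
    have hint : |∫ s in (vstar j)..(v j), |f s - f (vstar j)| ^ (2 - α)|
        ≤ |ε j| ^ (2 - α) * |v j - vstar j| := by
      have := intervalIntegral.norm_integral_le_of_norm_le_const
        (C := |ε j| ^ (2 - α)) (a := vstar j) (b := v j)
        (f := fun s => |f s - f (vstar j)| ^ (2 - α)) ?_
      · simpa [Real.norm_eq_abs] using this
      · intro s hs
        have hs' : s ∈ Set.uIcc (vstar j) (v j) := Set.mem_Icc_of_Ioc hs
        rw [Real.norm_eq_abs, abs_of_nonneg (Real.rpow_nonneg (abs_nonneg _) _)]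
        exact Real.rpow_le_rpow (abs_nonneg _) (hpt s hs') (by linarith)
    calc |∫ s in (vstar j)..(v j), |f s - f (vstar j)| ^ (2 - α)|
        ≤ |ε j| ^ (2 - α) * |v j - vstar j| := hint
      _ ≤ |ε j| ^ (2 - α) * (2 ^ (1 - α) * |ε j| ^ α) :=
          mul_le_mul_of_nonneg_left (hbound j) hC
      _ = 2 ^ (1 - α) * (|ε j| ^ (2 - α) * |ε j| ^ α) := by ring
      _ = 2 ^ (1 - α) * ε j ^ 2 := by
          rw [← Real.rpow_add' (abs_nonneg _) (by norm_num)]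
          norm_num
end
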